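/- arXiv:2108.07427 — 2 statements merged into one kernel-verified Lean document; each statement's English description precedes it below -/
import Mathlib

section
/- Let f_1, …, f_t be idempotents of FG with f̄_k = f_k for all k, f_k·f_l = 0 for all k ≠ l, and f_1 + ⋯ + f_t = 1. Then an FG-submodule C of (FG)² is self-orthogonal if and only if for each k = 1, …, t the component f_k C = {f_k·c : c ∈ C} is self-orthogonal, i.e., ⟨u, v⟩ = 0 for all u, v ∈ f_k C. -/
open scoped Classical

noncomputable section

/-- The "bar" map on the group algebra: `Σ aₓ x ↦ Σ aₓ x⁻¹`. -/
def bar {F : Type} [Field F] {G : Type} [CommGroup G] (a : MonoidAlgebra F G) :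
    MonoidAlgebra F G :=
  MonoidAlgebra.ofCoeff (Finsupp.mapDomain (fun x => x⁻¹) a.coeff)

/-- The euclidean inner product on the group algebra. -/
def inn {F : Type} [Field F] {G : Type} [CommGroup G] [Fintype G]
    (a b : MonoidAlgebra F G) : F :=
  ∑ x : G, a.coeff x * b.coeff x

/-- The euclidean inner product on `(FG)²`. -/
def inn2 {F : Type} [Field F] {G : Type} [CommGroup G] [Fintype G]
    (u v : MonoidAlgebra F G × MonoidAlgebra F G) : F :=
  inn u.1 v.1 + inn u.2 v.2

/-- The Hamming weight of an element of `(FG)²` (number of nonzero coordinates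
among its `2n` coordinates). -/
def wt {F : Type} [Field F] {G : Type} [CommGroup G] [Fintype G]
    (u : MonoidAlgebra F G × MonoidAlgebra F G) : ℕ :=
  (Finset.univ.filter fun x : G => u.1.coeff x ≠ 0).card +
    (Finset.univ.filter fun x : G => u.2.coeff x ≠ 0).card

/-- The 2-quasi-abelian code generated by `(a,b)`: `C_{a,b} = {(ua, ub) : u ∈ FG}`. -/
def code {F : Type} [Field F] {G : Type} [CommGroup G]
    (a b : MonoidAlgebra F G) :
    Submodule (MonoidAlgebra F G) (MonoidAlgebra F G × MonoidAlgebra F G) :=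
  LinearMap.range
    ((LinearMap.mulRight (MonoidAlgebra F G) a).prod
      (LinearMap.mulRight (MonoidAlgebra F G) b))

/-- The dual (orthogonal complement) of a `2`-quasi-abelian code, as a set. -/
def dualSet {F : Type} [Field F] {G : Type} [CommGroup G] [Fintype G]
    (C : Submodule (MonoidAlgebra F G) (MonoidAlgebra F G × MonoidAlgebra F G)) :
    Set (MonoidAlgebra F G × MonoidAlgebra F G) :=
  {v | ∀ c ∈ C, inn2 v c = 0}

/-- A `2`-quasi-abelian code is self-dual if it equals its orthogonal complement. -/
def IsSelfDualCode {F : Type} [Field F] {G : Type} [CommGroup G] [Fintype G]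
    (C : Submodule (MonoidAlgebra F G) (MonoidAlgebra F G × MonoidAlgebra F G)) : Prop :=
  (C : Set (MonoidAlgebra F G × MonoidAlgebra F G)) = dualSet C

/-- A `2`-quasi-abelian code is self-orthogonal if `⟨u,v⟩ = 0` for all `u, v` in it. -/
def IsSelfOrthCode {F : Type} [Field F] {G : Type} [CommGroup G] [Fintype G]
    (C : Submodule (MonoidAlgebra F G) (MonoidAlgebra F G × MonoidAlgebra F G)) : Prop :=
  ∀ u ∈ C, ∀ v ∈ C, inn2 u v = 0

/-- The minimum Hamming weight of the nonzero elements of a code. -/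
def minwt {F : Type} [Field F] {G : Type} [CommGroup G] [Fintype G]
    (C : Submodule (MonoidAlgebra F G) (MonoidAlgebra F G × MonoidAlgebra F G)) : ℕ :=
  sInf {k | ∃ v ∈ C, v ≠ 0 ∧ wt v = k}

/-- `μ_q(n)`: the minimal size of a nontrivial `q`-cyclotomic coset of `ℤ/nℤ`. -/
def mu (q n : ℕ) : ℕ :=
  sInf {k | ∃ a : ZMod n, a ≠ 0 ∧
    k = Nat.card {b : ZMod n | ∃ j : ℕ, b = a * (q : ZMod n) ^ j}}

/-- The `q`-entropy function. -/
def entropy (q : ℕ) (δ : ℝ) : ℝ :=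
  δ * Real.logb q (q - 1) - δ * Real.logb q δ - (1 - δ) * Real.logb q (1 - δ)

/-- A primitive idempotent of a commutative ring. -/
def IsPrimIdem {A : Type} [CommRing A] (e : A) : Prop :=
  IsIdempotentElem e ∧ e ≠ 0 ∧
    ¬ ∃ e' e'' : A, IsIdempotentElem e' ∧ IsIdempotentElem e'' ∧
      e' ≠ 0 ∧ e'' ≠ 0 ∧ e' * e'' = 0 ∧ e = e' + e''

/-- The principal idempotent `e₀ = n⁻¹ Σ_{x∈G} x`. -/
def eZero (F : Type) [Field F] (G : Type) [CommGroup G] [Fintype G] : MonoidAlgebra F G :=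
  ((Fintype.card G : F)⁻¹) • ∑ x : G, MonoidAlgebra.single x (1 : F)

/-- `F`-dimension of an `FG`-submodule of `(FG)²`. -/
def fdim2 (F : Type) [Field F] {G : Type} [CommGroup G]
    (C : Submodule (MonoidAlgebra F G) (MonoidAlgebra F G × MonoidAlgebra F G)) : ℕ :=
  Module.finrank F (Submodule.restrictScalars F C)

/-- `F`-dimension of an ideal of `FG`. -/
def fdim (F : Type) [Field F] {G : Type} [CommGroup G]
    (A : Ideal (MonoidAlgebra F G)) : ℕ :=
  Module.finrank F (Submodule.restrictScalars F A)

/-! Multiplication by `a` is adjoint to multiplication by `ā` for the coordinatewise inner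
product, so an idempotent `e` with `ē = e` satisfies `⟨e u, v⟩ = ⟨e² u, v⟩ = ⟨e u, e v⟩`.
Writing `u = Σ fₖ u` therefore gives `⟨u, v⟩ = Σₖ ⟨fₖ u, fₖ v⟩`. -/

section InnerProduct

variable {F : Type} [Field F] {G : Type} [CommGroup G]

lemma coeff_bar (a : MonoidAlgebra F G) (x : G) : (bar a).coeff x = a.coeff x⁻¹ := by
  simpa [bar] using Finsupp.mapDomain_apply inv_injective a.coeff x⁻¹

variable [Fintype G]

lemma coeff_mul_eq_sum (a b : MonoidAlgebra F G) (x : G) :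
    (a * b).coeff x = ∑ y : G, a.coeff y * b.coeff (y⁻¹ * x) := by
  rw [MonoidAlgebra.coeff_mul_apply_left, Finsupp.sum_fintype _ _ (by simp)]

lemma inn_add_left (a b c : MonoidAlgebra F G) : inn (a + b) c = inn a c + inn b c := by
  simp only [inn, MonoidAlgebra.coeff_add, Finsupp.add_apply, add_mul, Finset.sum_add_distrib]

lemma inn_mul_left (a c d : MonoidAlgebra F G) : inn (a * c) d = inn c (bar a * d) := by
  have lhs : inn (a * c) d = ∑ y : G, ∑ x : G, a.coeff y * c.coeff x * d.coeff (y * x) := by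
    simp only [inn, coeff_mul_eq_sum, Finset.sum_mul]
    rw [Finset.sum_comm]
    refine Finset.sum_congr rfl fun y _ => ?_
    rw [← Equiv.sum_comp (Equiv.mulLeft y)]
    simp [mul_assoc]
  have rhs : inn c (bar a * d) = ∑ y : G, ∑ x : G, a.coeff y * c.coeff x * d.coeff (y * x) := by
    simp only [inn, coeff_mul_eq_sum, coeff_bar, Finset.mul_sum]
    rw [Finset.sum_comm, ← Equiv.sum_comp (Equiv.inv G)]
    refine Finset.sum_congr rfl fun y _ => Finset.sum_congr rfl fun x _ => ?_
    simp only [Equiv.inv_apply, inv_inv]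
    ring
  rw [lhs, rhs]

lemma inn2_add_left (u w v : MonoidAlgebra F G × MonoidAlgebra F G) :
    inn2 (u + w) v = inn2 u v + inn2 w v := by
  simp only [inn2, Prod.fst_add, Prod.snd_add, inn_add_left]
  ring

lemma inn2_sum_left {ι : Type} (s : Finset ι) (w : ι → MonoidAlgebra F G × MonoidAlgebra F G)
    (v : MonoidAlgebra F G × MonoidAlgebra F G) :
    inn2 (∑ k ∈ s, w k) v = ∑ k ∈ s, inn2 (w k) v :=
  map_sum (AddMonoidHom.mk' (fun u => inn2 u v) fun u w => inn2_add_left u w v) w s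

lemma inn2_smul_left (a : MonoidAlgebra F G) (u v : MonoidAlgebra F G × MonoidAlgebra F G) :
    inn2 (a • u) v = inn2 u (bar a • v) := by
  simp only [inn2, Prod.smul_fst, Prod.smul_snd, smul_eq_mul, inn_mul_left]

lemma inn2_smul_smul_of_isIdempotentElem {e : MonoidAlgebra F G} (he : IsIdempotentElem e)
    (hbar : bar e = e) (u v : MonoidAlgebra F G × MonoidAlgebra F G) :
    inn2 (e • u) (e • v) = inn2 (e • u) v :=
  calc inn2 (e • u) (e • v) = inn2 (e • u) (bar e • v) := by rw [hbar]
    _ = inn2 (e • e • u) v := (inn2_smul_left e (e • u) v).symm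
    _ = inn2 (e • u) v := by rw [smul_smul, he.eq]

lemma inn2_eq_sum_of_isIdempotentElem {ι : Type} [Fintype ι] (f : ι → MonoidAlgebra F G)
    (hidem : ∀ k, IsIdempotentElem (f k)) (hbar : ∀ k, bar (f k) = f k) (hsum : ∑ k, f k = 1)
    (u v : MonoidAlgebra F G × MonoidAlgebra F G) :
    inn2 u v = ∑ k, inn2 (f k • u) (f k • v) :=
  calc inn2 u v = inn2 (∑ k, f k • u) v := by rw [← Finset.sum_smul, hsum, one_smul]
    _ = ∑ k, inn2 (f k • u) (f k • v) := by
      rw [inn2_sum_left]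
      exact Finset.sum_congr rfl fun k _ =>
        (inn2_smul_smul_of_isIdempotentElem (hidem k) (hbar k) u v).symm

end InnerProduct

theorem stmt_14_general (F : Type) [Field F] (G : Type) [CommGroup G] [Fintype G]
    (t : ℕ) (f : Fin t → MonoidAlgebra F G)
    (hidem : ∀ k, IsIdempotentElem (f k)) (hbar : ∀ k, bar (f k) = f k)
    (hsum : ∑ k, f k = 1)
    (C : Submodule (MonoidAlgebra F G) (MonoidAlgebra F G × MonoidAlgebra F G)) :
    IsSelfOrthCode C ↔
      ∀ k, ∀ u ∈ C, ∀ v ∈ C, inn2 (f k • u) (f k • v) = 0 := by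
  refine ⟨fun h k u hu v hv => h _ (C.smul_mem _ hu) _ (C.smul_mem _ hv), fun h u hu v hv => ?_⟩
  rw [inn2_eq_sum_of_isIdempotentElem f hidem hbar hsum u v]
  exact Finset.sum_eq_zero fun k _ => h k u hu v hv

/-- For idempotents `f₁, …, f_t` with `f̄ₖ = fₖ`, `fₖ·fₗ = 0` (`k ≠ l`) and
`Σ fₖ = 1`, an `FG`-submodule `C ≤ (FG)²` is self-orthogonal iff each component
`fₖ C` is self-orthogonal. -/
theorem stmt_14 (F : Type) [Field F] [Fintype F] (G : Type) [CommGroup G] [Fintype G]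
    (hn : 1 < Fintype.card G) (hodd : Odd (Fintype.card G))
    (hcop : Nat.Coprime (Fintype.card G) (Fintype.card F))
    (t : ℕ) (f : Fin t → MonoidAlgebra F G)
    (hidem : ∀ k, IsIdempotentElem (f k)) (hbar : ∀ k, bar (f k) = f k)
    (horth : ∀ k l, k ≠ l → f k * f l = 0) (hsum : ∑ k, f k = 1)
    (C : Submodule (MonoidAlgebra F G) (MonoidAlgebra F G × MonoidAlgebra F G)) :
    IsSelfOrthCode C ↔
      ∀ k, ∀ u ∈ C, ∀ v ∈ C, inn2 (f k • u) (f k • v) = 0 :=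
  stmt_14_general F G t f hidem hbar hsum C

end
end

section
/- Let e be a primitive idempotent of FG with ē = e and e ≠ e_0, where e_0 = n^{-1}Σ_{x∈G} x, and write dim_F FGe = 2k (this dimension is even). Then the number of elements β ∈ FGe satisfying β·β̄ = −e equals q^{k} + 1. Equivalently, in the finite field FGe of cardinality q^{2k} on which the bar map acts as the Frobenius β ↦ β^{q^k}, the equation β^{q^k + 1} = −e has exactly q^k + 1 solutions. -/
open scoped Classical

noncomputable section

/-!
Since `FG` is semisimple and `e` is primitive, `K = FG ⧸ (1 - e)` is a field, and reduction
modulo `1 - e` identifies `FG·e` with `K`, sending `e` to `1`. As `ē = e`, the bar map descends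
to an involutive `F`-automorphism `τ` of `K`. It is not the identity: otherwise `x² e = e` for
all `x ∈ G`, and since squaring is onto in a group of odd order, `e` would be `G`-invariant,
which for a nonzero idempotent forces `e = e₀`. The only involution of the cyclic group
`Gal(K/F)` of order `2k` is `y ↦ y ^ q ^ k`, so with `l = q ^ k` we count the solutions of
`y ^ (l + 1) = -1` in a field with `l²` elements. They form a coset of the `(l + 1)`-torsion of
the cyclic group `Kˣ`, which has `l + 1` elements, and the coset exists because the
`(l + 1)`-th powers are exactly the `(l - 1)`-torsion, which contains `-1`.
-/

theorem FiniteField.natCast_ne_zero_of_coprime {F : Type*} [Field F] [Fintype F] {n : ℕ}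
    (hn : n.Coprime (Fintype.card F)) : (n : F) ≠ 0 := fun h =>
  CharP.ringChar_ne_one (R := F) <| Nat.eq_one_of_dvd_coprimes hn ((ringChar.spec F n).1 h)
    ((ringChar.spec F _).1 (FiniteField.cast_card_eq_zero F))

theorem FiniteField.neg_one_pow_sqrt_card_sub_one {K : Type*} [Field K] [Fintype K] {l : ℕ}
    (hK : Fintype.card K = l ^ 2) : (-1 : K) ^ (l - 1) = 1 := by
  rcases Nat.even_or_odd l with hl | hl
  · have : ringChar K = 2 := FiniteField.even_card_iff_char_two.2 <| by
      rw [hK, ← Nat.even_iff]; exact (Nat.even_pow' two_ne_zero).2 hl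
    have : CharP K 2 := ringChar.of_eq this
    simp [CharTwo.neg_eq]
  · exact (Nat.Odd.sub_odd hl odd_one).neg_one_pow

theorem FiniteField.card_pow_succ_eq_neg_one {K : Type*} [Field K] [Fintype K] {l : ℕ}
    (hK : Fintype.card K = l ^ 2) : Nat.card {y : K | y ^ (l + 1) = -1} = l + 1 := by
  have hunits : Nat.card Kˣ = (l - 1) * (l + 1) := by
    rw [Nat.card_units, Nat.card_eq_fintype_card, hK]
    simpa [mul_comm] using Nat.sq_sub_sq l 1
  let f : Kˣ →* Kˣ := powMonoidHom (l + 1)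
  have hker : ∀ d, d ∣ Nat.card Kˣ → Nat.card (powMonoidHom d : Kˣ →* Kˣ).ker = d :=
    fun d hd => by rw [IsCyclic.card_powMonoidHom_ker, Nat.gcd_eq_right hd]
  have hrange : f.range = (powMonoidHom (l - 1) : Kˣ →* Kˣ).ker := by
    refine Subgroup.eq_of_le_of_card_ge ?_ ?_
    · rintro _ ⟨u, rfl⟩
      simp only [MonoidHom.mem_ker, powMonoidHom_apply, f, ← pow_mul]
      rw [mul_comm, ← hunits, pow_card_eq_one']
    · rw [hker _ (hunits ▸ dvd_mul_right _ _), IsCyclic.card_powMonoidHom_range, hunits,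
        Nat.gcd_eq_right (dvd_mul_left _ _), Nat.mul_div_cancel _ (by omega)]
  obtain ⟨u₀, hu₀⟩ : (-1 : Kˣ) ∈ f.range := by
    rw [hrange, MonoidHom.mem_ker, powMonoidHom_apply, ← Units.val_inj]
    push_cast
    exact FiniteField.neg_one_pow_sqrt_card_sub_one hK
  have hset : {y : K | y ^ (l + 1) = -1} = Units.val '' (f ⁻¹' {f u₀}) := by
    ext y
    simp only [Set.mem_ofPred_eq, Set.mem_image, Set.mem_preimage, Set.mem_singleton_iff, hu₀]
    constructor
    · intro hy
      have hy0 : y ≠ 0 := by rintro rfl; simp at hy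
      exact ⟨Units.mk0 y hy0, Units.ext (by simpa [f] using hy), rfl⟩
    · rintro ⟨u, hu, rfl⟩
      simpa [f] using congr(($hu : K))
  rw [hset, Nat.card_image_of_injective Units.val_injective, Nat.card_congr (f.fiberEquivKer u₀),
    hker _ (hunits ▸ dvd_mul_left _ _)]

theorem FiniteField.algEquiv_apply_eq_pow_of_sq_eq_one {F K : Type*} [Field F] [Fintype F]
    [Field K] [Finite K] [Algebra F K] {k : ℕ} (hk : Module.finrank F K = 2 * k)
    {σ : K ≃ₐ[F] K} (hσ : σ ≠ 1) (hσ2 : σ ^ 2 = 1) (y : K) :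
    σ y = y ^ Fintype.card F ^ k := by
  obtain ⟨⟨j, hj⟩, rfl⟩ := (bijective_frobeniusAlgEquivOfAlgebraic_pow F K).2 σ
  have hdvd : 2 * k ∣ 2 * j := by
    rw [← hk, ← orderOf_frobeniusAlgEquivOfAlgebraic]
    exact orderOf_dvd_of_pow_eq_one (by rwa [mul_comm, pow_mul])
  obtain ⟨c, rfl⟩ := Nat.dvd_of_mul_dvd_mul_left two_pos hdvd
  obtain rfl : c = 1 := by
    rcases c with _ | _ | c
    · simp at hσ
    · rfl
    · nlinarith
  dsimp only
  rw [mul_one, AlgEquiv.coe_pow, coe_frobeniusAlgEquivOfAlgebraic_iterate]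

theorem FiniteField.card_mul_apply_eq_neg_one {F K : Type*} [Field F] [Fintype F]
    [Field K] [Fintype K] [Algebra F K] {k : ℕ} (hk : Module.finrank F K = 2 * k)
    {σ : K ≃ₐ[F] K} (hσ : σ ≠ 1) (hσ2 : σ ^ 2 = 1) :
    Nat.card {y : K | y * σ y = -1} = Fintype.card F ^ k + 1 := by
  simp only [algEquiv_apply_eq_pow_of_sq_eq_one hk hσ hσ2, ← pow_succ']
  refine card_pow_succ_eq_neg_one ?_
  rw [Module.card_eq_pow_finrank (K := F), hk, pow_mul']

section IdempotentQuotient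

open Ideal

variable {R : Type} [CommRing R] {e : R}

theorem IsPrimIdem.eq_zero_or_eq {g : R} (he : IsPrimIdem e) (hg : IsIdempotentElem g)
    (hge : g * e = g) : g = 0 ∨ g = e := by
  by_contra! h
  refine he.2.2 ⟨g, e - g, hg, ?_, h.1, sub_ne_zero.2 h.2.symm, ?_, by ring⟩
  · simp only [IsIdempotentElem, sub_mul, mul_sub, he.1.eq, hg.eq, mul_comm e g, hge]
    ring
  · rw [mul_sub, hg.eq, hge, sub_self]

theorem exists_algEquiv_quotient_lift_of_involutive {F : Type*} [CommRing F] [Algebra F R]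
    {φ : R →ₐ[F] R} (hφe : φ e = e) (hφφ : ∀ a, φ (φ a) = a) :
    ∃ τ : (R ⧸ span {1 - e}) ≃ₐ[F] (R ⧸ span {1 - e}),
      τ ^ 2 = 1 ∧ ∀ a, τ (Ideal.Quotient.mk _ a) = Ideal.Quotient.mk _ (φ a) := by
  have hle : span {1 - e} ≤ (span {1 - e}).comap φ := by
    rw [span_singleton_le_iff_mem, mem_comap, map_sub, map_one, hφe]
    exact mem_span_singleton_self _
  let σ := Ideal.quotientMapₐ (span {1 - e}) φ hle
  have hσσ : σ.comp σ = AlgHom.id F _ :=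
    Ideal.Quotient.algHom_ext F (AlgHom.ext fun a => congrArg (Ideal.Quotient.mk _) (hφφ a))
  exact ⟨AlgEquiv.ofAlgHom σ σ hσσ hσσ, AlgEquiv.ext fun y => AlgHom.congr_fun hσσ y,
    fun a => rfl⟩

namespace IsIdempotentElem

variable (he : IsIdempotentElem e)
include he

theorem mem_span_one_sub_iff_mul_eq_zero {x : R} : x ∈ span {1 - e} ↔ x * e = 0 := by
  rw [← he.ker_toSpanSingleton_eq_span]; rfl

theorem mem_span_singleton_iff_mul_eq {x : R} : x ∈ span {e} ↔ x * e = x := by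
  rw [← he.ker_toSpanSingleton_one_sub_eq_span, LinearMap.mem_ker,
    LinearMap.toSpanSingleton_apply, smul_eq_mul, mul_sub, mul_one, sub_eq_zero, eq_comm]

theorem mk_eq_mk_iff {x y : R} :
    Ideal.Quotient.mk (span {1 - e}) x = Ideal.Quotient.mk _ y ↔ x * e = y * e := by
  rw [Ideal.Quotient.eq, he.mem_span_one_sub_iff_mul_eq_zero, sub_mul, sub_eq_zero]

theorem mk_mul_self (x : R) :
    Ideal.Quotient.mk (span {1 - e}) (x * e) = Ideal.Quotient.mk _ x := by
  rw [he.mk_eq_mk_iff, mul_assoc, he.eq]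

theorem mk_self : Ideal.Quotient.mk (span {1 - e}) e = 1 := by
  simpa using he.mk_mul_self 1

theorem injOn_mk : Set.InjOn (Ideal.Quotient.mk (span {1 - e})) (span {e}) :=
  fun x hx y hy hxy => by
  rwa [he.mk_eq_mk_iff, he.mem_span_singleton_iff_mul_eq.1 hx,
    he.mem_span_singleton_iff_mul_eq.1 hy] at hxy

theorem finrank_quotient_span_one_sub (F : Type*) [Field F] [Algebra F R] :
    Module.finrank F (R ⧸ span {1 - e}) = Module.finrank F ((span {e}).restrictScalars F) := by
  refine (LinearEquiv.ofBijective
    ((Ideal.Quotient.mkₐ F (span {1 - e})).toLinearMap ∘ₗ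
      ((span {e}).restrictScalars F).subtype)
    ⟨fun x y hxy => Subtype.ext (he.injOn_mk x.2 y.2 hxy), fun y => ?_⟩).finrank_eq.symm
  obtain ⟨x, rfl⟩ := Ideal.Quotient.mk_surjective y
  exact ⟨⟨x * e, mem_span_singleton'.2 ⟨x, rfl⟩⟩, he.mk_mul_self x⟩

theorem card_mul_map_eq_neg_eq_card_quotient {φ : R → R} (hφ : ∀ a, φ (a * e) = φ a * e)
    {ψ : R ⧸ span {1 - e} → R ⧸ span {1 - e}}
    (hψ : ∀ a, ψ (Ideal.Quotient.mk _ a) = Ideal.Quotient.mk _ (φ a)) :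
    Nat.card {β : R | β ∈ span {e} ∧ β * φ β = -e} = Nat.card {y | y * ψ y = -1} := by
  refine Nat.card_congr (Set.BijOn.equiv _ ⟨?_, he.injOn_mk.mono fun β hβ => hβ.1, ?_⟩)
  · rintro β ⟨-, hβ⟩
    rw [Set.mem_ofPred_eq, hψ, ← map_mul, hβ, map_neg, he.mk_self]
  · intro y hy
    obtain ⟨x, rfl⟩ := Ideal.Quotient.mk_surjective y
    have hxe : x * e ∈ span {e} := mem_span_singleton'.2 ⟨x, rfl⟩
    refine ⟨x * e, ⟨hxe, he.injOn_mk (mul_mem_right _ _ hxe)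
      (neg_mem (mem_span_singleton_self e)) ?_⟩, he.mk_mul_self x⟩
    rw [Set.mem_ofPred_eq, hψ] at hy
    rw [hφ, mul_mul_mul_comm, he.eq, he.mk_mul_self, map_mul, hy, map_neg, he.mk_self]

end IsIdempotentElem

-- A larger ideal is `(f)` with `f` idempotent, and primitivity of `e`, applied to `e * f`,
-- leaves only `f = 1 - e` or `f = 1`.
theorem IsPrimIdem.isMaximal_span_one_sub [IsSemisimpleRing R] (he : IsPrimIdem e) :
    (span {1 - e}).IsMaximal := by
  refine ⟨⟨fun htop => he.2.1 ?_, fun J hJ => ?_⟩⟩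
  · simpa using
      he.1.mem_span_one_sub_iff_mul_eq_zero.1 (htop ▸ Submodule.mem_top : (1 : R) ∈ _)
  obtain ⟨f, hf, rfl⟩ := IsSemisimpleRing.ideal_eq_span_idempotent J
  have hfe : (1 - e) * f = 1 - e :=
    hf.mem_span_singleton_iff_mul_eq.1 (hJ.le (mem_span_singleton_self _))
  have hf_split : f = (1 - e) + e * f := by linear_combination hfe
  rcases he.eq_zero_or_eq (he.1.mul hf) (by rw [mul_right_comm, he.1.eq]) with h | h
  · rw [h, add_zero] at hf_split
    exact absurd (hf_split ▸ le_rfl) hJ.not_ge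
  · rw [h, sub_add_cancel] at hf_split
    rw [hf_split, span_singleton_one]

end IdempotentQuotient

section GroupAlgebra

open MonoidAlgebra

variable {F : Type} [Field F] {G : Type} [CommGroup G]

def barAlgHom : MonoidAlgebra F G →ₐ[F] MonoidAlgebra F G :=
  mapDomainAlgHom F F invMonoidHom

theorem barAlgHom_apply (a : MonoidAlgebra F G) : barAlgHom a = bar a := rfl

theorem bar_mul (a b : MonoidAlgebra F G) : bar (a * b) = bar a * bar b :=
  map_mul barAlgHom a b

theorem bar_bar (a : MonoidAlgebra F G) : bar (bar a) = a := by
  have hinv : (invMonoidHom : G →* G).comp invMonoidHom = .id G := MonoidHom.ext inv_inv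
  rw [← barAlgHom_apply, ← barAlgHom_apply, ← AlgHom.comp_apply, barAlgHom,
    ← mapDomainAlgHom_comp, hinv, mapDomainAlgHom_id, AlgHom.id_apply]

theorem bar_single (x : G) (c : F) : bar (single x c) = single x⁻¹ c :=
  mapDomain_single

theorem single_mul_eq_of_forall_bar_mul_eq [Finite G] (hodd : Odd (Nat.card G))
    {e : MonoidAlgebra F G} (h : ∀ a, bar a * e = a * e) (y : G) : single y 1 * e = e := by
  obtain ⟨x, rfl⟩ := (powCoprime (Nat.coprime_two_right.2 hodd)).surjective y
  calc single (x ^ 2) 1 * e = single x 1 * (single x 1 * e) := by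
        rw [← mul_assoc, single_mul_single, one_mul, sq]
    _ = single x 1 * (single x⁻¹ 1 * e) := by rw [← h, bar_single]
    _ = e := by rw [← mul_assoc, single_mul_single, mul_inv_cancel, one_mul, ← one_def, one_mul]

theorem eq_eZero_of_forall_single_mul_eq [Fintype G] {e : MonoidAlgebra F G}
    (he : IsIdempotentElem e) (he0 : e ≠ 0) (h : ∀ y : G, single y 1 * e = e) :
    e = eZero F G := by
  set s : MonoidAlgebra F G := ∑ x : G, single x 1
  have he_s : e = e.coeff 1 • s := by
    ext g
    have hg := congr(($(h g)).coeff g)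
    rw [coeff_single_mul_apply, inv_mul_cancel, one_mul] at hg
    simp [s, coeff_sum, coeff_single, hg]
  have hs : s * e = (Fintype.card G : F) • e := by
    simp only [s, Finset.sum_mul, h, Finset.sum_const, Finset.card_univ, Nat.cast_smul_eq_nsmul]
  have hcn : e.coeff 1 * Fintype.card G = 1 := smul_left_injective F he0 <| by
    dsimp only
    rw [one_smul, mul_smul, ← hs, ← smul_mul_assoc, ← he_s, he.eq]
  rw [he_s, eq_inv_of_mul_eq_one_left hcn, eZero]

end GroupAlgebra

theorem stmt_15_general (F : Type) [Field F] [Fintype F] (G : Type) [CommGroup G] [Fintype G]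
    (hodd : Odd (Fintype.card G))
    (hcop : Nat.Coprime (Fintype.card G) (Fintype.card F))
    (e : MonoidAlgebra F G) (he : IsPrimIdem e) (hbar : bar e = e)
    (hne : e ≠ eZero F G) (k : ℕ) (hk : fdim F (Ideal.span {e}) = 2 * k) :
    Nat.card {β : MonoidAlgebra F G |
        β ∈ Ideal.span ({e} : Set (MonoidAlgebra F G)) ∧ β * bar β = -e} =
      Fintype.card F ^ k + 1 := by
  -- Maschke's theorem needs this to make `FG` semisimple.
  have : NeZero (Nat.card G : F) :=
    ⟨Nat.card_eq_fintype_card (α := G) ▸ FiniteField.natCast_ne_zero_of_coprime hcop⟩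
  have := he.isMaximal_span_one_sub
  let := Ideal.Quotient.field (Ideal.span {1 - e})
  have : Finite (MonoidAlgebra F G ⧸ Ideal.span {1 - e}) := Module.finite_of_finite F
  have := Fintype.ofFinite (MonoidAlgebra F G ⧸ Ideal.span {1 - e})
  obtain ⟨τ, hτ2, hτ⟩ := exists_algEquiv_quotient_lift_of_involutive
    (φ := (barAlgHom : MonoidAlgebra F G →ₐ[F] _)) hbar fun a => bar_bar a
  have hτ1 : τ ≠ 1 := fun h1 => hne <| eq_eZero_of_forall_single_mul_eq he.1 he.2.1 <|
    single_mul_eq_of_forall_bar_mul_eq (Nat.card_eq_fintype_card (α := G) ▸ hodd) fun a =>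
      he.1.mk_eq_mk_iff.1 (by rw [← barAlgHom_apply, ← hτ, h1, AlgEquiv.one_apply])
  rw [he.1.card_mul_map_eq_neg_eq_card_quotient (φ := bar) (fun a => by rw [bar_mul, hbar]) hτ]
  exact FiniteField.card_mul_apply_eq_neg_one ((he.1.finrank_quotient_span_one_sub F).trans hk)
    hτ1 hτ2

/-- For a primitive idempotent `e` with `ē = e`, `e ≠ e₀` and `dim_F FGe = 2k`,
the number of `β ∈ FGe` with `β·β̄ = -e` equals `q^k + 1`. -/
theorem stmt_15 (F : Type) [Field F] [Fintype F] (G : Type) [CommGroup G] [Fintype G]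
    (hn : 1 < Fintype.card G) (hodd : Odd (Fintype.card G))
    (hcop : Nat.Coprime (Fintype.card G) (Fintype.card F))
    (e : MonoidAlgebra F G) (he : IsPrimIdem e) (hbar : bar e = e)
    (hne : e ≠ eZero F G) (k : ℕ) (hk : fdim F (Ideal.span {e}) = 2 * k) :
    Nat.card {β : MonoidAlgebra F G |
        β ∈ Ideal.span ({e} : Set (MonoidAlgebra F G)) ∧ β * bar β = -e} =
      Fintype.card F ^ k + 1 :=
  stmt_15_general F G hodd hcop e he hbar hne k hk

end
end
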